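/- Consider the process in which S₁ ~ θ on 𝒮, the demand X₁, X₂, … is i.i.d. ~ P_X and independent of S₁, at each time t the output Y_t is drawn (conditionally independently of the past given W_t) according to the structured policy b(· | W_t) where W_t = S_t − X_t, and S_{t+1} = S_t + Y_t − X_t. Then for every horizon T, (1/T) I(S₁, X^T; Y^T) = I(W₁; X₁) = H(W₁) − H(S₁). -/

import Mathlib

open Finset
open scoped Classical

namespace SmartMeter

/-! ### Basic information measures for finitely supported distributions.
All entropies and mutual informations are in bits (base-2 logarithms). -/

/-- Probability that the random variable `Z` takes the value `z` under the pmf `p`. -/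
noncomputable def pr {Ω α : Type*} [Fintype Ω] [DecidableEq α]
    (p : Ω → ℝ) (Z : Ω → α) (z : α) : ℝ :=
  ∑ ω ∈ Finset.univ.filter (fun ω => Z ω = z), p ω

/-- Shannon entropy (in bits) of the random variable `Z` under the pmf `p`. -/
noncomputable def ent {Ω α : Type*} [Fintype Ω] [DecidableEq α]
    (p : Ω → ℝ) (Z : Ω → α) : ℝ :=
  -∑ z ∈ Finset.univ.image Z, pr p Z z * Real.logb 2 (pr p Z z)

/-- Mutual information `I(A; B)`. -/
noncomputable def mutInfo {Ω α β : Type*} [Fintype Ω] [DecidableEq α] [DecidableEq β]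
    (p : Ω → ℝ) (A : Ω → α) (B : Ω → β) : ℝ :=
  ent p A + ent p B - ent p (fun ω => (A ω, B ω))

/-- Conditional entropy `H(A | C)`. -/
noncomputable def condEnt {Ω α γ : Type*} [Fintype Ω] [DecidableEq α] [DecidableEq γ]
    (p : Ω → ℝ) (A : Ω → α) (C : Ω → γ) : ℝ :=
  ent p (fun ω => (A ω, C ω)) - ent p C

/-- Conditional mutual information `I(A; B | C)`. -/
noncomputable def condMutInfo {Ω α β γ : Type*} [Fintype Ω] [DecidableEq α] [DecidableEq β]
    [DecidableEq γ] (p : Ω → ℝ) (A : Ω → α) (B : Ω → β) (C : Ω → γ) : ℝ :=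
  ent p (fun ω => (A ω, C ω)) + ent p (fun ω => (B ω, C ω))
    - ent p (fun ω => (A ω, B ω, C ω)) - ent p C

/-- `p` is a probability mass function on the finite type `Ω`. -/
def IsPMF {Ω : Type*} [Fintype Ω] (p : Ω → ℝ) : Prop :=
  (∀ ω, 0 ≤ p ω) ∧ ∑ ω, p ω = 1

/-- Extension of a pmf on `{0, …, n}` to an integer-indexed function (zero out of range). -/
noncomputable def extZ {n : ℕ} (f : Fin (n + 1) → ℝ) (k : ℤ) : ℝ :=
  if h : 0 ≤ k ∧ k ≤ (n : ℤ) then f ⟨k.toNat, by omega⟩ else 0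

/-! ### The single-letter quantity `J*` -/

/-- `I(S - X; X)` for independent `X ~ PX` on `{0,…,mx}` and `S ~ θ` on `{0,…,ms}`. -/
noncomputable def iidMI (mx ms : ℕ) (PX : Fin (mx + 1) → ℝ) (θ : Fin (ms + 1) → ℝ) : ℝ :=
  mutInfo (fun ω : Fin (mx + 1) × Fin (ms + 1) => PX ω.1 * θ ω.2)
    (fun ω => ((ω.2 : ℕ) : ℤ) - ((ω.1 : ℕ) : ℤ)) (fun ω => ω.1)

/-- `J* = min over pmfs θ on 𝒮 of I(S - X; X)`. -/
noncomputable def Jstar (mx ms : ℕ) (PX : Fin (mx + 1) → ℝ) : ℝ :=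
  sInf {r : ℝ | ∃ θ : Fin (ms + 1) → ℝ, IsPMF θ ∧ iidMI mx ms PX θ = r}

/-! ### The structured policy `b*` -/

/-- `ξ(w) = Σ_{(x,s) : s - x = w} PX(x) θ(s)`, the pmf of `W = S - X`. -/
noncomputable def xiOf (mx ms : ℕ) (PX : Fin (mx + 1) → ℝ) (θ : Fin (ms + 1) → ℝ)
    (w : ℤ) : ℝ :=
  ∑ x : Fin (mx + 1), ∑ s : Fin (ms + 1),
    if ((s : ℕ) : ℤ) - ((x : ℕ) : ℤ) = w then PX x * θ s else 0

/-- The structured policy with respect to `(θ, ξ)`: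
`b(y|w) = PX(y) θ(y + w) / ξ(w)` for `y ∈ 𝒳 ∩ 𝒴₀(w)` (when `ξ(w) > 0`), else `0`. -/
noncomputable def bstar (mx my ms : ℕ) (PX : Fin (mx + 1) → ℝ) (θ : Fin (ms + 1) → ℝ)
    (w : ℤ) (y : Fin (my + 1)) : ℝ :=
  if xiOf mx ms PX θ w = 0 then 0
  else extZ PX ((y : ℕ) : ℤ) * extZ θ (((y : ℕ) : ℤ) + w) / xiOf mx ms PX θ w

/-! ### Trajectory spaces, policies and induced joint laws.
Time is indexed from `0`; `ω = (s₁, x, y)` records the initial battery state `S₁ = ω.1`,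
the demands `X_{t+1} = ω.2.1 t` and the outputs `Y_{t+1} = ω.2.2 t` for `t = 0, …, T-1`. -/

/-- Trajectories of horizon `T`. -/
abbrev Traj (mx my ms T : ℕ) :=
  Fin (ms + 1) × (Fin T → Fin (mx + 1)) × (Fin T → Fin (my + 1))

variable {mx my ms T : ℕ}

/-- Demand at (0-based) time `t`, as an integer (junk value `0` for `t ≥ T`). -/
def Xat (ω : Traj mx my ms T) (t : ℕ) : ℤ :=
  if h : t < T then ((ω.2.1 ⟨t, h⟩ : ℕ) : ℤ) else 0

/-- Output at (0-based) time `t`, as an integer (junk value `0` for `t ≥ T`). -/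
def Yat (ω : Traj mx my ms T) (t : ℕ) : ℤ :=
  if h : t < T then ((ω.2.2 ⟨t, h⟩ : ℕ) : ℤ) else 0

/-- Battery state at (0-based) time `t`: `S_{t+1} = S_t + Y_t - X_t`, `Sat ω 0 = S₁`. -/
def Sat (ω : Traj mx my ms T) (t : ℕ) : ℤ :=
  ((ω.1 : ℕ) : ℤ) + ∑ i ∈ Finset.range t, (Yat ω i - Xat ω i)

/-- `W_t = S_t - X_t`. -/
def Wat (ω : Traj mx my ms T) (t : ℕ) : ℤ := Sat ω t - Xat ω t

/-- A general causal (class `Q_A`) randomized battery policy: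
`q_t(y_t | x^t, s^t, y^{t-1})`; since `s^t` is determined by `(s₁, x^{t-1}, y^{t-1})`,
the policy is a function of `(x^t, s₁, y^{t-1})`. -/
def PolicyA (mx my ms : ℕ) : Type :=
  (t : ℕ) → (Fin (t + 1) → Fin (mx + 1)) → Fin (ms + 1) → (Fin t → Fin (my + 1)) →
    Fin (my + 1) → ℝ

/-- A class-`Q_B` policy: `q_t(y_t | x_t, s_t, y^{t-1})`. -/
def PolicyB (mx my ms : ℕ) : Type :=
  (t : ℕ) → Fin (mx + 1) → ℤ → (Fin t → Fin (my + 1)) → Fin (my + 1) → ℝ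

/-- The battery state `S_t` computed from `s₁` and the history `(x^t, y^{t-1})`. -/
def hstate {t : ℕ} (s1 : Fin (ms + 1)) (x : Fin (t + 1) → Fin (mx + 1))
    (y : Fin t → Fin (my + 1)) : ℤ :=
  ((s1 : ℕ) : ℤ) + ∑ i : Fin t, (((y i : ℕ) : ℤ) - ((x i.castSucc : ℕ) : ℤ))

/-- Each `q_t(· | x^t, s^t, y^{t-1})` is a pmf on `𝒴`. -/
def CondPMFA (q : PolicyA mx my ms) : Prop :=
  ∀ (t : ℕ) (x : Fin (t + 1) → Fin (mx + 1)) (s1 : Fin (ms + 1)) (y : Fin t → Fin (my + 1)),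
    (∀ yt, 0 ≤ q t x s1 y yt) ∧ ∑ yt, q t x s1 y yt = 1

/-- Feasibility of a class-`Q_A` policy: conditional pmfs supported on
`𝒴₀(s_t - x_t) = {y ∈ 𝒴 : s_t - x_t + y ∈ 𝒮}`. -/
def FeasibleA (q : PolicyA mx my ms) : Prop :=
  CondPMFA q ∧
  ∀ (t : ℕ) (x : Fin (t + 1) → Fin (mx + 1)) (s1 : Fin (ms + 1)) (y : Fin t → Fin (my + 1)),
    ∀ yt, q t x s1 y yt ≠ 0 →
      0 ≤ hstate s1 x y - ((x (Fin.last t) : ℕ) : ℤ) + ((yt : ℕ) : ℤ) ∧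
      hstate s1 x y - ((x (Fin.last t) : ℕ) : ℤ) + ((yt : ℕ) : ℤ) ≤ (ms : ℤ)

/-- Each `q_t(· | x_t, s_t, y^{t-1})` is a pmf on `𝒴`. -/
def CondPMFB (q : PolicyB mx my ms) : Prop :=
  ∀ (t : ℕ) (xt : Fin (mx + 1)) (s : ℤ) (y : Fin t → Fin (my + 1)),
    (∀ yt, 0 ≤ q t xt s y yt) ∧ ∑ yt, q t xt s y yt = 1

/-- Feasibility of a class-`Q_B` policy. -/
def FeasibleB (q : PolicyB mx my ms) : Prop :=
  CondPMFB q ∧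
  ∀ (t : ℕ) (xt : Fin (mx + 1)) (s : ℤ) (y : Fin t → Fin (my + 1)),
    0 ≤ s → s ≤ (ms : ℤ) →
    ∀ yt, q t xt s y yt ≠ 0 →
      0 ≤ s - ((xt : ℕ) : ℤ) + ((yt : ℕ) : ℤ) ∧
      s - ((xt : ℕ) : ℤ) + ((yt : ℕ) : ℤ) ≤ (ms : ℤ)

/-- The demand prefix `x^t = (x_0, …, x_t)` of a trajectory. -/
def prefX (ω : Traj mx my ms T) (t : Fin T) : Fin ((t : ℕ) + 1) → Fin (mx + 1) :=
  fun i => ω.2.1 ⟨(i : ℕ), lt_of_le_of_lt (Nat.lt_succ_iff.mp i.isLt) t.isLt⟩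

/-- The output prefix `y^{t-1} = (y_0, …, y_{t-1})` of a trajectory. -/
def prefY (ω : Traj mx my ms T) (t : Fin T) : Fin (t : ℕ) → Fin (my + 1) :=
  fun i => ω.2.2 ⟨(i : ℕ), i.isLt.trans t.isLt⟩

/-- Joint law on trajectories induced by i.i.d. demand `PX`, initial battery pmf `PS1`
(independent of the demand), and a class-`Q_A` policy `q`. -/
noncomputable def jointA (PS1 : Fin (ms + 1) → ℝ) (PX : Fin (mx + 1) → ℝ)
    (q : PolicyA mx my ms) (T : ℕ) (ω : Traj mx my ms T) : ℝ :=
  PS1 ω.1 * ∏ t : Fin T,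
    (PX (ω.2.1 t) * q (t : ℕ) (prefX ω t) ω.1 (prefY ω t) (ω.2.2 t))

/-- Weight of a demand trajectory under a Markov chain `(PX1, Qm)`. -/
noncomputable def markovWt (PX1 : Fin (mx + 1) → ℝ) (Qm : Fin (mx + 1) → Fin (mx + 1) → ℝ)
    {T : ℕ} (x : Fin T → Fin (mx + 1)) : ℝ :=
  ∏ t : Fin T,
    if _h : (t : ℕ) = 0 then PX1 (x t)
    else Qm (x ⟨(t : ℕ) - 1, lt_of_le_of_lt (Nat.sub_le _ _) t.isLt⟩) (x t)

/-- Joint law on trajectories induced by Markov demand and a class-`Q_A` policy. -/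
noncomputable def jointAMarkov (PS1 : Fin (ms + 1) → ℝ) (PX1 : Fin (mx + 1) → ℝ)
    (Qm : Fin (mx + 1) → Fin (mx + 1) → ℝ) (q : PolicyA mx my ms) (T : ℕ)
    (ω : Traj mx my ms T) : ℝ :=
  PS1 ω.1 * markovWt PX1 Qm ω.2.1 *
    ∏ t : Fin T, q (t : ℕ) (prefX ω t) ω.1 (prefY ω t) (ω.2.2 t)

/-- Joint law on trajectories induced by Markov demand and a class-`Q_B` policy. -/
noncomputable def jointBMarkov (PS1 : Fin (ms + 1) → ℝ) (PX1 : Fin (mx + 1) → ℝ)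
    (Qm : Fin (mx + 1) → Fin (mx + 1) → ℝ) (q : PolicyB mx my ms) (T : ℕ)
    (ω : Traj mx my ms T) : ℝ :=
  PS1 ω.1 * markovWt PX1 Qm ω.2.1 *
    ∏ t : Fin T, q (t : ℕ) (ω.2.1 t) (Sat ω (t : ℕ)) (prefY ω t) (ω.2.2 t)

/-- The memoryless time-invariant policy `q_t(y | x, s) = b*(y | s - x)`, as a member of the
class of general causal policies. -/
noncomputable def structuredPolicyA (mx my ms : ℕ) (PX : Fin (mx + 1) → ℝ)
    (θ : Fin (ms + 1) → ℝ) : PolicyA mx my ms :=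
  fun t x s1 y yt => bstar mx my ms PX θ (hstate s1 x y - ((x (Fin.last t) : ℕ) : ℤ)) yt

/-!
Under the structured policy `θ` is stationary: if `S ~ θ` and `X ~ PX` are independent and
`Y ~ b(· | S - X)`, then `(S - X + Y, Y) ~ θ ⊗ PX`. Hence every `S_t` has law `θ`, every
`(S_t, X_t)` has law `θ ⊗ PX` (so `W_t ~ ξ`), and the outputs `Y^T` are i.i.d. `~ PX`, while
`(S₁, X^T) ~ θ ⊗ PX^T`. Because `b(y | w) = PX(y) θ(y + w) / ξ(w)`, the information density
`log p(s₁, x, y) / (p(s₁, x) p(y))` telescopes to `∑_t (log θ(S_{t+1}) - log ξ(W_t))`, whose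
expectation is `T (H(W₁) - H(S₁))`. Finally `(W₁, X₁)` is an injective image of the independent
pair `(S₁, X₁)`, so `I(W₁; X₁) = H(W₁) + H(X₁) - H(S₁) - H(X₁)`.
-/

section InformationMeasures

variable {Ω ι κ α β : Type*} [Fintype Ω] [Fintype ι] [Fintype κ]

def HasLaw (p : Ω → ℝ) (Z : Ω → α) (r : ι → ℝ) (φ : ι → α) : Prop :=
  ∀ g : α → ℝ, ∑ ω, p ω * g (Z ω) = ∑ i, r i * g (φ i)

lemma HasLaw.comp {p : Ω → ℝ} {Z : Ω → α} {r : ι → ℝ} {φ : ι → α} (h : HasLaw p Z r φ) (f : α → β) :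
    HasLaw p (fun ω => f (Z ω)) r (fun i => f (φ i)) :=
  fun g => h (fun a => g (f a))

variable [DecidableEq α] [DecidableEq β]

lemma pr_eq_sum_ite (p : Ω → ℝ) (Z : Ω → α) (z : α) :
    pr p Z z = ∑ ω, if Z ω = z then p ω else 0 := by
  rw [pr, Finset.sum_filter]

lemma pr_apply_of_injective (p : Ω → ℝ) {Z : Ω → α} (hZ : Function.Injective Z) (ω : Ω) :
    pr p Z (Z ω) = p ω := by
  simp only [pr_eq_sum_ite, hZ.eq_iff, Finset.sum_ite_eq', Finset.mem_univ, if_true]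

lemma ent_eq_neg_sum_mul_logb_pr (p : Ω → ℝ) (Z : Ω → α) :
    ent p Z = -∑ ω, p ω * Real.logb 2 (pr p Z (Z ω)) := by
  rw [ent, ← Finset.sum_fiberwise_of_maps_to (g := Z) (t := Finset.univ.image Z)
    (fun ω _ => Finset.mem_image_of_mem Z (Finset.mem_univ ω))]
  congr 1
  refine Finset.sum_congr rfl fun z _ => ?_
  have hfiber : ∀ ω ∈ Finset.univ.filter (fun ω => Z ω = z),
      p ω * Real.logb 2 (pr p Z (Z ω)) = p ω * Real.logb 2 (pr p Z z) :=
    fun ω hω => by rw [(Finset.mem_filter.mp hω).2]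
  rw [Finset.sum_congr rfl hfiber, ← Finset.sum_mul]
  rfl

lemma mutInfo_eq_sum_mul_logb (p : Ω → ℝ) (A : Ω → α) (B : Ω → β) :
    mutInfo p A B = ∑ ω, p ω * (Real.logb 2 (pr p (fun ω => (A ω, B ω)) (A ω, B ω))
      - Real.logb 2 (pr p A (A ω)) - Real.logb 2 (pr p B (B ω))) := by
  simp only [mutInfo, ent_eq_neg_sum_mul_logb_pr, mul_sub, Finset.sum_sub_distrib]
  ring

namespace HasLaw

variable {p : Ω → ℝ} {Z : Ω → α} {r : ι → ℝ} {φ : ι → α}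

lemma pr_eq (h : HasLaw p Z r φ) (z : α) : pr p Z z = ∑ i, if φ i = z then r i else 0 := by
  simpa [pr_eq_sum_ite, mul_ite] using h (fun a => if a = z then 1 else 0)

lemma pr_apply (h : HasLaw p Z r φ) (hφ : Function.Injective φ) (i : ι) : pr p Z (φ i) = r i := by
  simp only [h.pr_eq, hφ.eq_iff, Finset.sum_ite_eq', Finset.mem_univ, if_true]

lemma ent_eq (h : HasLaw p Z r φ) : ent p Z = -∑ i, r i * Real.logb 2 (pr p Z (φ i)) := by
  rw [ent_eq_neg_sum_mul_logb_pr, h (fun a => Real.logb 2 (pr p Z a))]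

lemma ent_eq_of_injective (h : HasLaw p Z r φ) (hφ : Function.Injective φ) :
    ent p Z = -∑ i, r i * Real.logb 2 (r i) := by
  simp only [h.ent_eq, h.pr_apply hφ]

end HasLaw

lemma sum_mul_logb_mul_of_sum_eq_one {a : ι → ℝ} {b : κ → ℝ} (ha : ∑ i, a i = 1)
    (hb : ∑ j, b j = 1) :
    ∑ k : ι × κ, a k.1 * b k.2 * Real.logb 2 (a k.1 * b k.2)
      = ∑ i, a i * Real.logb 2 (a i) + ∑ j, b j * Real.logb 2 (b j) := by
  have hsplit : ∀ k : ι × κ, a k.1 * b k.2 * Real.logb 2 (a k.1 * b k.2)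
      = a k.1 * Real.logb 2 (a k.1) * b k.2 + a k.1 * (b k.2 * Real.logb 2 (b k.2)) := by
    intro k
    by_cases h : a k.1 * b k.2 = 0
    · rcases mul_eq_zero.mp h with h | h <;> simp [h]
    · obtain ⟨h1, h2⟩ := mul_ne_zero_iff.mp h
      rw [Real.logb_mul h1 h2]
      ring
  simp only [hsplit, Finset.sum_add_distrib, Fintype.sum_prod_type, ← Finset.mul_sum,
    ← Finset.sum_mul, hb, ha, mul_one, one_mul]

end InformationMeasures

section ExtZ

variable {n : ℕ}

lemma extZ_natCast (f : Fin (n + 1) → ℝ) (i : Fin (n + 1)) : extZ f (i : ℕ) = f i := by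
  rw [extZ, dif_pos ⟨by omega, by have := i.isLt; omega⟩]
  congr

lemma extZ_eq_sum (f : Fin (n + 1) → ℝ) (k : ℤ) :
    extZ f k = ∑ i : Fin (n + 1), if ((i : ℕ) : ℤ) = k then f i else 0 := by
  by_cases hk : 0 ≤ k ∧ k ≤ (n : ℤ)
  · obtain ⟨i, rfl⟩ : ∃ i : Fin (n + 1), ((i : ℕ) : ℤ) = k := ⟨⟨k.toNat, by omega⟩, by simp; omega⟩
    simp only [Nat.cast_inj, Fin.val_inj, Finset.sum_ite_eq', Finset.mem_univ, if_true,
      extZ_natCast]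
  · rw [extZ, dif_neg hk, eq_comm]
    exact Finset.sum_eq_zero fun i _ => if_neg (by have := i.isLt; omega)

lemma exists_of_extZ_ne_zero {f : Fin (n + 1) → ℝ} {k : ℤ} (h : extZ f k ≠ 0) :
    ∃ i : Fin (n + 1), ((i : ℕ) : ℤ) = k ∧ f i ≠ 0 := by
  rw [extZ_eq_sum] at h
  obtain ⟨i, -, hi⟩ := Finset.exists_ne_zero_of_sum_ne_zero h
  by_cases hik : ((i : ℕ) : ℤ) = k
  · exact ⟨i, hik, by rwa [if_pos hik] at hi⟩
  · exact absurd (if_neg hik) hi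

lemma sum_extZ_mul_of_le {m : ℕ} (hnm : n ≤ m) (f : Fin (n + 1) → ℝ) (g : ℤ → ℝ) :
    ∑ j : Fin (m + 1), extZ f (j : ℕ) * g (j : ℕ) = ∑ i, f i * g (i : ℕ) := by
  refine (Fintype.sum_of_injective (Fin.castLE (by omega)) (Fin.castLE_injective _) _ _
    (fun j hj => ?_) (fun i => by simp [extZ_natCast])).symm
  rw [extZ, dif_neg, zero_mul]
  rintro ⟨-, hj'⟩
  exact hj ⟨⟨j, by omega⟩, rfl⟩

end ExtZ

section StructuredPolicy

variable {PX : Fin (mx + 1) → ℝ} {θ : Fin (ms + 1) → ℝ}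

lemma xiOf_ne_zero (hPX : ∀ i, 0 ≤ PX i) (hθ : ∀ i, 0 ≤ θ i) {x : Fin (mx + 1)}
    {s : Fin (ms + 1)} (hx : PX x ≠ 0) (hs : θ s ≠ 0) :
    xiOf mx ms PX θ ((s : ℕ) - (x : ℕ)) ≠ 0 := by
  refine (Finset.sum_pos' (fun x' _ => Finset.sum_nonneg fun s' _ => ?_) ⟨x, by simp, ?_⟩).ne'
  · split_ifs
    exacts [mul_nonneg (hPX x') (hθ s'), le_rfl]
  · refine Finset.sum_pos' (fun s' _ => ?_) ⟨s, by simp, ?_⟩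
    · split_ifs
      exacts [mul_nonneg (hPX x) (hθ s'), le_rfl]
    · rw [if_pos rfl]
      exact mul_pos ((hPX x).lt_of_ne' hx) ((hθ s).lt_of_ne' hs)

lemma xiOf_ne_zero_of_extZ (hPX : ∀ i, 0 ≤ PX i) (hθ : ∀ i, 0 ≤ θ i) {k σ : ℤ}
    (hk : extZ PX k ≠ 0) (hσ : extZ θ σ ≠ 0) : xiOf mx ms PX θ (σ - k) ≠ 0 := by
  obtain ⟨x, rfl, hx⟩ := exists_of_extZ_ne_zero hk
  obtain ⟨s, rfl, hs⟩ := exists_of_extZ_ne_zero hσ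
  exact xiOf_ne_zero hPX hθ hx hs

lemma bstar_eq (w : ℤ) (y : Fin (my + 1)) :
    bstar mx my ms PX θ w y = extZ PX (y : ℕ) * extZ θ ((y : ℕ) + w) / xiOf mx ms PX θ w := by
  rw [bstar]
  split_ifs with h
  · rw [h, div_zero]
  · rfl

lemma sum_bstar (hxy : mx ≤ my) {w : ℤ} (hw : xiOf mx ms PX θ w ≠ 0) :
    ∑ y, bstar mx my ms PX θ w y = 1 := by
  simp only [bstar_eq, ← Finset.sum_div]
  rw [div_eq_one_iff_eq hw, sum_extZ_mul_of_le hxy PX (fun k => extZ θ (k + w)), xiOf]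
  refine Finset.sum_congr rfl fun x _ => ?_
  rw [extZ_eq_sum, Finset.mul_sum]
  refine Finset.sum_congr rfl fun s _ => ?_
  by_cases h : ((s : ℕ) : ℤ) = (x : ℕ) + w
  · rw [if_pos h, if_pos (by omega)]
  · rw [if_neg h, if_neg (by omega), mul_zero]

lemma PX_mul_sum_bstar (hxy : mx ≤ my) (hPX : ∀ i, 0 ≤ PX i) (hθ : ∀ i, 0 ≤ θ i) {σ : ℤ}
    (hσ : extZ θ σ ≠ 0) (x : Fin (mx + 1)) :
    PX x * ∑ y, bstar mx my ms PX θ (σ - (x : ℕ)) y = PX x := by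
  by_cases hx : PX x = 0
  · rw [hx, zero_mul]
  · rw [sum_bstar hxy (xiOf_ne_zero_of_extZ hPX hθ (by rwa [extZ_natCast]) hσ), mul_one]

/-- `(S - X + Y, Y) ~ θ ⊗ PX` for independent `S ~ θ`, `X ~ PX` and `Y ~ b(· | S - X)`. -/
lemma sum_mul_bstar_stationary (hPX : ∀ i, 0 ≤ PX i) (hθ : ∀ i, 0 ≤ θ i) (y : Fin (my + 1))
    (F : ℤ → ℝ) :
    ∑ σ : Fin (ms + 1), θ σ * ∑ x : Fin (mx + 1),
        PX x * bstar mx my ms PX θ ((σ : ℕ) - (x : ℕ)) y * F ((σ : ℕ) - (x : ℕ) + (y : ℕ))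
      = extZ PX (y : ℕ) * ∑ s, θ s * F (s : ℕ) := by
  set K : Fin (ms + 1) → ℝ := fun s =>
    extZ PX (y : ℕ) * θ s * F (s : ℕ) / xiOf mx ms PX θ ((s : ℕ) - (y : ℕ))
  have hb : ∀ w : ℤ, bstar mx my ms PX θ w y * F (w + (y : ℕ))
      = ∑ s : Fin (ms + 1), if ((s : ℕ) : ℤ) - (y : ℕ) = w then K s else 0 := by
    intro w
    rw [bstar_eq, extZ_eq_sum θ, Finset.mul_sum, Finset.sum_div, Finset.sum_mul]
    refine Finset.sum_congr rfl fun s _ => ?_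
    by_cases h : ((s : ℕ) : ℤ) - (y : ℕ) = w
    · rw [if_pos (by omega), if_pos h, ← h]
      simp only [K, sub_add_cancel]
      ring
    · rw [if_neg (by omega), if_neg h]
      ring
  calc _ = ∑ σ : Fin (ms + 1), ∑ x : Fin (mx + 1), ∑ s : Fin (ms + 1),
        if ((s : ℕ) : ℤ) - (y : ℕ) = (σ : ℕ) - (x : ℕ) then θ σ * PX x * K s else 0 := by
        simp only [Finset.mul_sum, mul_assoc, hb, mul_ite, mul_zero]
    _ = ∑ s : Fin (ms + 1), xiOf mx ms PX θ ((s : ℕ) - (y : ℕ)) * K s := by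
        rw [Finset.sum_comm_cycle]
        refine Finset.sum_congr rfl fun s _ => ?_
        simp only [xiOf, Finset.sum_mul, ite_mul, zero_mul]
        rw [Finset.sum_comm]
        refine Finset.sum_congr rfl fun x _ => Finset.sum_congr rfl fun σ _ => ?_
        by_cases h : ((σ : ℕ) : ℤ) - (x : ℕ) = (s : ℕ) - (y : ℕ)
        · rw [if_pos h.symm, if_pos h]
          ring
        · rw [if_neg (Ne.symm h), if_neg h]
    _ = _ := by
        rw [Finset.mul_sum]
        refine Finset.sum_congr rfl fun s _ => ?_
        by_cases hξ : xiOf mx ms PX θ ((s : ℕ) - (y : ℕ)) = 0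
        · have : extZ PX (y : ℕ) * θ s = 0 := by
            by_contra h
            obtain ⟨hy, hs⟩ := mul_ne_zero_iff.mp h
            exact xiOf_ne_zero_of_extZ hPX hθ hy (by rwa [extZ_natCast]) hξ
          simp only [K, hξ, div_zero, mul_zero, ← mul_assoc, this, zero_mul]
        · simp only [K]
          field_simp

end StructuredPolicy

lemma snoc_eq_iff {n : ℕ} {α : Type*} {a : Fin n → α} {d : α} {q : Fin (n + 1) → α} :
    Fin.snoc a d = q ↔ a = Fin.init q ∧ d = q (Fin.last n) := by
  conv_lhs => rw [← Fin.snoc_init_self q]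
  exact Fin.snoc_inj

section Trajectories

lemma Xat_of_lt (ω : Traj mx my ms T) {t : ℕ} (h : t < T) : Xat ω t = (ω.2.1 ⟨t, h⟩ : ℕ) :=
  dif_pos h

lemma Yat_of_lt (ω : Traj mx my ms T) {t : ℕ} (h : t < T) : Yat ω t = (ω.2.2 ⟨t, h⟩ : ℕ) :=
  dif_pos h

lemma Sat_zero (ω : Traj mx my ms T) : Sat ω 0 = (ω.1 : ℕ) := by
  simp [Sat]

lemma Sat_succ (ω : Traj mx my ms T) (t : ℕ) : Sat ω (t + 1) = Sat ω t + Yat ω t - Xat ω t := by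
  rw [Sat, Sat, Finset.sum_range_succ]
  ring

lemma Sat_congr {T' : ℕ} {ω : Traj mx my ms T} {ω' : Traj mx my ms T'} {t : ℕ}
    (h1 : ω.1 = ω'.1) (hXY : ∀ i < t, Xat ω i = Xat ω' i ∧ Yat ω i = Yat ω' i) :
    Sat ω t = Sat ω' t := by
  rw [Sat, Sat, h1]
  congr 1
  refine Finset.sum_congr rfl fun i hi => ?_
  obtain ⟨hX, hY⟩ := hXY i (Finset.mem_range.mp hi)
  rw [hX, hY]

def trajSnoc (ω : Traj mx my ms T) (x : Fin (mx + 1)) (y : Fin (my + 1)) :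
    Traj mx my ms (T + 1) :=
  (ω.1, Fin.snoc ω.2.1 x, Fin.snoc ω.2.2 y)

section trajSnoc

variable (ω : Traj mx my ms T) (x : Fin (mx + 1)) (y : Fin (my + 1))

lemma Xat_trajSnoc {t : ℕ} (h : t < T) : Xat (trajSnoc ω x y) t = Xat ω t := by
  rw [Xat_of_lt _ (Nat.lt_succ_of_lt h), Xat_of_lt _ h]
  exact congrArg _ (congrArg _ (Fin.snoc_castSucc (α := fun _ => Fin (mx + 1)) x ω.2.1 ⟨t, h⟩))

lemma Yat_trajSnoc {t : ℕ} (h : t < T) : Yat (trajSnoc ω x y) t = Yat ω t := by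
  rw [Yat_of_lt _ (Nat.lt_succ_of_lt h), Yat_of_lt _ h]
  exact congrArg _ (congrArg _ (Fin.snoc_castSucc (α := fun _ => Fin (my + 1)) y ω.2.2 ⟨t, h⟩))

lemma Xat_trajSnoc_last : Xat (trajSnoc ω x y) T = (x : ℕ) := by
  rw [Xat_of_lt _ T.lt_succ_self]
  exact congrArg _ (congrArg _ (Fin.snoc_last (α := fun _ => Fin (mx + 1)) x ω.2.1))

lemma Yat_trajSnoc_last : Yat (trajSnoc ω x y) T = (y : ℕ) := by
  rw [Yat_of_lt _ T.lt_succ_self]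
  exact congrArg _ (congrArg _ (Fin.snoc_last (α := fun _ => Fin (my + 1)) y ω.2.2))

lemma Sat_trajSnoc {t : ℕ} (h : t ≤ T) : Sat (trajSnoc ω x y) t = Sat ω t :=
  Sat_congr rfl fun _ hi =>
    ⟨Xat_trajSnoc ω x y (hi.trans_le h), Yat_trajSnoc ω x y (hi.trans_le h)⟩

lemma Wat_trajSnoc {t : ℕ} (h : t < T) : Wat (trajSnoc ω x y) t = Wat ω t := by
  rw [Wat, Wat, Sat_trajSnoc ω x y h.le, Xat_trajSnoc ω x y h]

lemma Wat_trajSnoc_last : Wat (trajSnoc ω x y) T = Sat ω T - (x : ℕ) := by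
  rw [Wat, Sat_trajSnoc ω x y le_rfl, Xat_trajSnoc_last]

lemma Sat_trajSnoc_succ : Sat (trajSnoc ω x y) (T + 1) = Sat ω T - (x : ℕ) + (y : ℕ) := by
  rw [Sat_succ, Sat_trajSnoc ω x y le_rfl, Xat_trajSnoc_last, Yat_trajSnoc_last]
  ring

end trajSnoc

lemma sum_traj_succ (f : Traj mx my ms (T + 1) → ℝ) :
    ∑ ω, f ω = ∑ ω : Traj mx my ms T, ∑ x, ∑ y, f (trajSnoc ω x y) := by
  let e : Traj mx my ms T × Fin (mx + 1) × Fin (my + 1) ≃ Traj mx my ms (T + 1) :=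
    { toFun := fun q => trajSnoc q.1 q.2.1 q.2.2
      invFun := fun ω => ((ω.1, Fin.init ω.2.1, Fin.init ω.2.2),
        ω.2.1 (Fin.last T), ω.2.2 (Fin.last T))
      left_inv := fun _ => by simp [trajSnoc]
      right_inv := fun _ => by simp [trajSnoc] }
  simp only [← e.sum_comp, Fintype.sum_prod_type]
  rfl

lemma sum_traj_zero (f : Traj mx my ms 0 → ℝ) :
    ∑ ω, f ω = ∑ s, f (s, Fin.elim0, Fin.elim0) := by
  simp only [Fintype.sum_prod_type, Fintype.sum_unique]
  exact Finset.sum_congr rfl fun s _ => congrArg f (Prod.ext rfl (Subsingleton.elim _ _))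

end Trajectories

noncomputable def structuredLaw (my : ℕ) (PX : Fin (mx + 1) → ℝ) (θ : Fin (ms + 1) → ℝ) (T : ℕ)
    (ω : Traj mx my ms T) : ℝ :=
  θ ω.1 * ∏ t : Fin T, PX (ω.2.1 t) * bstar mx my ms PX θ (Wat ω t) (ω.2.2 t)

section StructuredLaw

variable {PX : Fin (mx + 1) → ℝ} {θ : Fin (ms + 1) → ℝ}

lemma hstate_eq_Sat (ω : Traj mx my ms T) (t : Fin T) :
    hstate ω.1 (prefX ω t) (prefY ω t) = Sat ω t := by
  rw [hstate, Sat, ← Fin.sum_univ_eq_sum_range]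
  congr 1
  refine Finset.sum_congr rfl fun i _ => ?_
  rw [Yat_of_lt _ (i.isLt.trans t.isLt), Xat_of_lt _ (i.isLt.trans t.isLt)]
  rfl

lemma jointA_structuredPolicyA :
    jointA θ PX (structuredPolicyA mx my ms PX θ) T = structuredLaw my PX θ T := by
  funext ω
  refine congrArg _ (Finset.prod_congr rfl fun t _ => congrArg _ ?_)
  simp only [structuredPolicyA, hstate_eq_Sat, Wat, Xat_of_lt ω t.isLt]
  rfl

lemma structuredLaw_trajSnoc (ω : Traj mx my ms T) (x : Fin (mx + 1)) (y : Fin (my + 1)) :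
    structuredLaw my PX θ (T + 1) (trajSnoc ω x y)
      = structuredLaw my PX θ T ω * (PX x * bstar mx my ms PX θ (Sat ω T - (x : ℕ)) y) := by
  rw [structuredLaw, structuredLaw, Fin.prod_univ_castSucc, mul_assoc]
  congr 2
  · refine Finset.prod_congr rfl fun t _ => ?_
    simp only [trajSnoc, Fin.snoc_castSucc, Fin.val_castSucc]
    rw [← Wat_trajSnoc ω x y t.isLt]
    rfl
  · simp only [trajSnoc, Fin.snoc_last, Fin.val_last]
    rw [← Wat_trajSnoc_last ω x y]
    rfl

lemma sum_structuredLaw_succ (f : Traj mx my ms (T + 1) → ℝ) :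
    ∑ ω, structuredLaw my PX θ (T + 1) ω * f ω
      = ∑ ω, structuredLaw my PX θ T ω * ∑ x, ∑ y,
          PX x * bstar mx my ms PX θ (Sat ω T - (x : ℕ)) y * f (trajSnoc ω x y) := by
  simp only [sum_traj_succ, structuredLaw_trajSnoc, Finset.mul_sum, mul_assoc]

/-- `b(y | w) = PX(y) θ(y + w) / ξ(w)` and `Y_t + W_t = S_{t+1}`. -/
lemma structuredLaw_eq_mul_prod (ω : Traj mx my ms T) :
    structuredLaw my PX θ T ω
      = θ ω.1 * (∏ t, PX (ω.2.1 t)) * (∏ t, extZ PX (ω.2.2 t : ℕ))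
        * ∏ t : Fin T, extZ θ (Sat ω (t + 1)) / xiOf mx ms PX θ (Wat ω t) := by
  have hS : ∀ t : Fin T, ((ω.2.2 t : ℕ) : ℤ) + Wat ω t = Sat ω (t + 1) := fun t => by
    rw [Wat, Sat_succ, Yat_of_lt ω t.isLt]
    ring
  simp only [structuredLaw, bstar_eq, hS, mul_div_assoc, Finset.prod_mul_distrib]
  ring

lemma extZ_Sat_ne_zero {ω : Traj mx my ms T} (hω : structuredLaw my PX θ T ω ≠ 0) :
    extZ θ (Sat ω T) ≠ 0 := by
  cases T with
  | zero => simpa [Sat_zero, extZ_natCast, structuredLaw] using hω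
  | succ T =>
    rw [structuredLaw_eq_mul_prod] at hω
    have := Finset.prod_ne_zero_iff.mp (right_ne_zero_of_mul hω) (Fin.last T) (by simp)
    exact (div_ne_zero_iff.mp this).1

/-- On the support of the law, the next output is a pmf, so it can be summed out. -/
lemma sum_structuredLaw_succ_of_trajSnoc (hxy : mx ≤ my) (hPX : ∀ i, 0 ≤ PX i)
    (hθ : ∀ i, 0 ≤ θ i) {f : Traj mx my ms (T + 1) → ℝ} {g : Traj mx my ms T → Fin (mx + 1) → ℝ}
    (hfg : ∀ ω x y, f (trajSnoc ω x y) = g ω x) :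
    ∑ ω, structuredLaw my PX θ (T + 1) ω * f ω
      = ∑ ω, structuredLaw my PX θ T ω * ∑ x, PX x * g ω x := by
  rw [sum_structuredLaw_succ]
  refine Finset.sum_congr rfl fun ω _ => ?_
  by_cases hω : structuredLaw my PX θ T ω = 0
  · rw [hω, zero_mul, zero_mul]
  refine congrArg _ (Finset.sum_congr rfl fun x _ => ?_)
  simp only [hfg, ← Finset.sum_mul, ← Finset.mul_sum,
    PX_mul_sum_bstar hxy hPX hθ (extZ_Sat_ne_zero hω)]
def trajRestrict {t : ℕ} (h : t ≤ T) (ω : Traj mx my ms T) : Traj mx my ms t :=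
  (ω.1, fun i => ω.2.1 (Fin.castLE h i), fun i => ω.2.2 (Fin.castLE h i))

section trajRestrict

variable {t i : ℕ} (h : t ≤ T) (ω : Traj mx my ms T)

lemma Xat_trajRestrict (hi : i < t) : Xat (trajRestrict h ω) i = Xat ω i := by
  rw [Xat_of_lt _ hi, Xat_of_lt _ (hi.trans_le h)]
  rfl

lemma Yat_trajRestrict (hi : i < t) : Yat (trajRestrict h ω) i = Yat ω i := by
  rw [Yat_of_lt _ hi, Yat_of_lt _ (hi.trans_le h)]
  rfl

lemma Sat_trajRestrict (hi : i ≤ t) : Sat (trajRestrict h ω) i = Sat ω i :=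
  Sat_congr rfl fun _ hj =>
    ⟨Xat_trajRestrict h ω (hj.trans_le hi), Yat_trajRestrict h ω (hj.trans_le hi)⟩

end trajRestrict

lemma trajRestrict_trajSnoc {t : ℕ} (h : t ≤ T) (ω : Traj mx my ms T) (x : Fin (mx + 1))
    (y : Fin (my + 1)) : trajRestrict (h.trans T.le_succ) (trajSnoc ω x y) = trajRestrict h ω :=
  Prod.ext rfl <| Prod.ext
    (funext fun i => Fin.snoc_castSucc (α := fun _ => Fin (mx + 1)) x ω.2.1 (Fin.castLE h i))
    (funext fun i => Fin.snoc_castSucc (α := fun _ => Fin (my + 1)) y ω.2.2 (Fin.castLE h i))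

lemma sum_structuredLaw_trajRestrict (hxy : mx ≤ my) (hPX : IsPMF PX) (hθ : ∀ i, 0 ≤ θ i)
    {t : ℕ} (h : t ≤ T) (G : Traj mx my ms t → ℝ) :
    ∑ ω, structuredLaw my PX θ T ω * G (trajRestrict h ω)
      = ∑ ω, structuredLaw my PX θ t ω * G ω := by
  induction T with
  | zero =>
    obtain rfl : t = 0 := Nat.le_zero.mp h
    rfl
  | succ T ih =>
    rcases Nat.lt_or_eq_of_le h with h' | rfl
    · have hT : t ≤ T := Nat.lt_succ_iff.mp h'
      rw [sum_structuredLaw_succ_of_trajSnoc hxy hPX.1 hθ (g := fun ω _ => G (trajRestrict hT ω))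
        fun ω x y => congrArg G (trajRestrict_trajSnoc hT ω x y)]
      simp only [← Finset.sum_mul, hPX.2, one_mul, ih hT]
    · rfl

lemma sum_structuredLaw_ite_outputs (hPX : ∀ i, 0 ≤ PX i) (hθ : ∀ i, 0 ≤ θ i)
    (q : Fin T → Fin (my + 1)) (F : ℤ → ℝ) :
    ∑ ω, structuredLaw my PX θ T ω * (if ω.2.2 = q then F (Sat ω T) else 0)
      = (∏ t, extZ PX (q t : ℕ)) * ∑ s, θ s * F (s : ℕ) := by
  induction T generalizing F with
  | zero =>
    simp [sum_traj_zero, structuredLaw, Sat_zero, Subsingleton.elim _ q]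
  | succ T ih =>
    have hstep : ∀ ω : Traj mx my ms T, ∑ x, ∑ y,
        PX x * bstar mx my ms PX θ (Sat ω T - (x : ℕ)) y
          * (if (trajSnoc ω x y).2.2 = q then F (Sat (trajSnoc ω x y) (T + 1)) else 0)
        = if ω.2.2 = Fin.init q then ∑ x, PX x
            * bstar mx my ms PX θ (Sat ω T - (x : ℕ)) (q (Fin.last T))
            * F (Sat ω T - (x : ℕ) + (q (Fin.last T) : ℕ)) else 0 := by
      intro ω
      simp only [Sat_trajSnoc_succ]
      simp only [trajSnoc, snoc_eq_iff]
      split_ifs with h <;> simp [h]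
    rw [sum_structuredLaw_succ]
    simp only [hstep]
    refine (ih (Fin.init q) fun σ => ∑ x, PX x * bstar mx my ms PX θ (σ - (x : ℕ)) (q (Fin.last T))
      * F (σ - (x : ℕ) + (q (Fin.last T) : ℕ))).trans ?_
    rw [sum_mul_bstar_stationary hPX hθ, Fin.prod_univ_castSucc, mul_assoc]
    rfl
lemma hasLaw_fst (hxy : mx ≤ my) (hPX : IsPMF PX) (hθ : ∀ i, 0 ≤ θ i) :
    HasLaw (structuredLaw my PX θ T) (fun ω => ω.1) θ id := by
  intro F
  refine (sum_structuredLaw_trajRestrict hxy hPX hθ (Nat.zero_le T) fun ω => F ω.1).trans ?_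
  simp [sum_traj_zero, structuredLaw]

lemma hasLaw_Sat (hxy : mx ≤ my) (hPX : IsPMF PX) (hθ : ∀ i, 0 ≤ θ i) :
    HasLaw (structuredLaw my PX θ T) (fun ω => Sat ω T) θ (fun s => (s : ℕ)) := by
  intro F
  have hsplit : ∀ ω : Traj mx my ms T, structuredLaw my PX θ T ω * F (Sat ω T)
      = ∑ q, structuredLaw my PX θ T ω * if ω.2.2 = q then F (Sat ω T) else 0 :=
    fun ω => by rw [← Finset.mul_sum, Finset.sum_ite_eq, if_pos (Finset.mem_univ _)]
  have hPX' : ∑ y : Fin (my + 1), extZ PX (y : ℕ) = 1 := by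
    simpa [hPX.2] using sum_extZ_mul_of_le hxy PX fun _ => 1
  rw [Finset.sum_congr rfl fun ω _ => hsplit ω, Finset.sum_comm]
  simp only [sum_structuredLaw_ite_outputs hPX.1 hθ, ← Finset.sum_mul]
  rw [← Fintype.sum_pow (fun y : Fin (my + 1) => extZ PX (y : ℕ)), hPX', one_pow, one_mul]

lemma hasLaw_Sat_of_le (hxy : mx ≤ my) (hPX : IsPMF PX) (hθ : ∀ i, 0 ≤ θ i) {t : ℕ}
    (ht : t ≤ T) : HasLaw (structuredLaw my PX θ T) (fun ω => Sat ω t) θ (fun s => (s : ℕ)) := by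
  intro F
  simp only [← Sat_trajRestrict ht _ le_rfl]
  rw [sum_structuredLaw_trajRestrict hxy hPX hθ ht fun ω => F (Sat ω t)]
  exact hasLaw_Sat hxy hPX hθ F

lemma hasLaw_Sat_Xat (hxy : mx ≤ my) (hPX : IsPMF PX) (hθ : ∀ i, 0 ≤ θ i) {t : ℕ}
    (ht : t < T) :
    HasLaw (structuredLaw my PX θ T) (fun ω => (Sat ω t, Xat ω t))
      (fun i : Fin (ms + 1) × Fin (mx + 1) => θ i.1 * PX i.2)
      (fun i => ((i.1 : ℕ), (i.2 : ℕ))) := by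
  intro F
  simp only [← Sat_trajRestrict ht _ t.le_succ, ← Xat_trajRestrict ht _ t.lt_succ_self]
  rw [sum_structuredLaw_trajRestrict hxy hPX hθ ht fun ω => F (Sat ω t, Xat ω t),
    sum_structuredLaw_succ_of_trajSnoc hxy hPX.1 hθ (g := fun ω x => F (Sat ω t, (x : ℕ)))
      fun ω x y => by rw [Sat_trajSnoc ω x y le_rfl, Xat_trajSnoc_last],
    hasLaw_Sat hxy hPX hθ fun σ => ∑ x, PX x * F (σ, (x : ℕ)), Fintype.sum_prod_type]
  simp only [Finset.mul_sum, mul_assoc]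

lemma hasLaw_Wat_Xat (hxy : mx ≤ my) (hPX : IsPMF PX) (hθ : ∀ i, 0 ≤ θ i) {t : ℕ}
    (ht : t < T) :
    HasLaw (structuredLaw my PX θ T) (fun ω => (Wat ω t, Xat ω t))
      (fun i : Fin (ms + 1) × Fin (mx + 1) => θ i.1 * PX i.2)
      (fun i => ((i.1 : ℕ) - (i.2 : ℕ), (i.2 : ℕ))) :=
  (hasLaw_Sat_Xat hxy hPX hθ ht).comp fun p => (p.1 - p.2, p.2)

lemma hasLaw_Xat (hxy : mx ≤ my) (hPX : IsPMF PX) (hθ : IsPMF θ) {t : ℕ} (ht : t < T) :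
    HasLaw (structuredLaw my PX θ T) (fun ω => Xat ω t) PX (fun x => (x : ℕ)) := by
  intro F
  rw [(hasLaw_Sat_Xat hxy hPX hθ.1 ht).comp Prod.snd F, Fintype.sum_prod_type, Finset.sum_comm]
  simp only [mul_assoc, ← Finset.sum_mul, hθ.2, one_mul]

lemma hasLaw_Wat (hxy : mx ≤ my) (hPX : IsPMF PX) (hθ : ∀ i, 0 ≤ θ i) {t : ℕ} (ht : t < T) :
    HasLaw (structuredLaw my PX θ T) (fun ω => Wat ω t)
      (fun i : Fin (ms + 1) × Fin (mx + 1) => θ i.1 * PX i.2)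
      (fun i => ((i.1 : ℕ) : ℤ) - (i.2 : ℕ)) :=
  (hasLaw_Wat_Xat hxy hPX hθ ht).comp Prod.fst
lemma pr_Wat (hxy : mx ≤ my) (hPX : IsPMF PX) (hθ : ∀ i, 0 ≤ θ i) {t : ℕ} (ht : t < T) (w : ℤ) :
    pr (structuredLaw my PX θ T) (fun ω => Wat ω t) w = xiOf mx ms PX θ w := by
  rw [(hasLaw_Wat hxy hPX hθ ht).pr_eq, Fintype.sum_prod_type, Finset.sum_comm, xiOf]
  simp only [mul_comm (θ _)]

lemma sum_mul_logb_xiOf_Wat (hxy : mx ≤ my) (hPX : IsPMF PX) (hθ : ∀ i, 0 ≤ θ i) {t : ℕ}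
    (ht : t < T) :
    ∑ ω, structuredLaw my PX θ T ω * Real.logb 2 (xiOf mx ms PX θ (Wat ω t))
      = -ent (structuredLaw my PX θ T) (fun ω => Wat ω 0) := by
  have h0 : 0 < T := (Nat.zero_le t).trans_lt ht
  rw [hasLaw_Wat hxy hPX hθ ht fun w => Real.logb 2 (xiOf mx ms PX θ w),
    (hasLaw_Wat hxy hPX hθ h0).ent_eq, neg_neg]
  simp only [pr_Wat hxy hPX hθ h0]

lemma sum_mul_logb_extZ_Sat (hxy : mx ≤ my) (hPX : IsPMF PX) (hθ : ∀ i, 0 ≤ θ i) {t : ℕ}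
    (ht : t ≤ T) :
    ∑ ω, structuredLaw my PX θ T ω * Real.logb 2 (extZ θ (Sat ω t))
      = -ent (structuredLaw my PX θ T) (fun ω => ω.1) := by
  rw [hasLaw_Sat_of_le hxy hPX hθ ht fun k => Real.logb 2 (extZ θ k),
    (hasLaw_fst hxy hPX hθ).ent_eq_of_injective Function.injective_id, neg_neg]
  simp only [extZ_natCast]

lemma mutInfo_Wat_Xat (hxy : mx ≤ my) (hPX : IsPMF PX) (hθ : IsPMF θ) (hT : 0 < T) :
    mutInfo (structuredLaw my PX θ T) (fun ω => Wat ω 0) (fun ω => Xat ω 0)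
      = ent (structuredLaw my PX θ T) (fun ω => Wat ω 0)
        - ent (structuredLaw my PX θ T) (fun ω => ω.1) := by
  have hX : Function.Injective fun x : Fin (mx + 1) => ((x : ℕ) : ℤ) :=
    fun a b h => Fin.ext (Nat.cast_injective h)
  have hWX : Function.Injective
      fun i : Fin (ms + 1) × Fin (mx + 1) => (((i.1 : ℕ) : ℤ) - (i.2 : ℕ), ((i.2 : ℕ) : ℤ)) := by
    intro a b h
    simp only [Prod.mk.injEq] at h
    exact Prod.ext (Fin.ext (by omega)) (Fin.ext (by omega))
  rw [mutInfo, (hasLaw_Xat hxy hPX hθ hT).ent_eq_of_injective hX,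
    (hasLaw_Wat_Xat hxy hPX hθ.1 hT).ent_eq_of_injective hWX,
    (hasLaw_fst hxy hPX hθ.1).ent_eq_of_injective Function.injective_id,
    sum_mul_logb_mul_of_sum_eq_one hθ.2 hPX.2]
  ring

lemma sum_structuredLaw_ite_fst_demands (hxy : mx ≤ my) (hPX : ∀ i, 0 ≤ PX i)
    (hθ : ∀ i, 0 ≤ θ i) (z : Fin (ms + 1) × (Fin T → Fin (mx + 1))) :
    ∑ ω, structuredLaw my PX θ T ω * (if (ω.1, ω.2.1) = z then 1 else 0)
      = θ z.1 * ∏ t, PX (z.2 t) := by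
  induction T with
  | zero => simp [sum_traj_zero, structuredLaw, Prod.ext_iff, Subsingleton.elim _ z.2]
  | succ T ih =>
    rw [sum_structuredLaw_succ_of_trajSnoc hxy hPX hθ (g := fun ω x =>
      (if x = z.2 (Fin.last T) then 1 else 0) * if (ω.1, ω.2.1) = (z.1, Fin.init z.2) then 1 else 0)
      fun ω x y => by
        simp only [trajSnoc, Prod.ext_iff, snoc_eq_iff, ite_zero_mul_ite_zero, mul_one]
        exact if_congr (by tauto) rfl rfl]
    calc _ = ∑ ω, structuredLaw my PX θ T ω
          * (if (ω.1, ω.2.1) = (z.1, Fin.init z.2) then 1 else 0) * PX (z.2 (Fin.last T)) := by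
          refine Finset.sum_congr rfl fun ω _ => ?_
          split_ifs <;> simp [mul_comm]
      _ = _ := by
          rw [← Finset.sum_mul, ih, Fin.prod_univ_castSucc, mul_assoc]
          rfl

lemma pr_fst_demands (hxy : mx ≤ my) (hPX : ∀ i, 0 ≤ PX i) (hθ : ∀ i, 0 ≤ θ i)
    (z : Fin (ms + 1) × (Fin T → Fin (mx + 1))) :
    pr (structuredLaw my PX θ T) (fun ω => (ω.1, ω.2.1)) z = θ z.1 * ∏ t, PX (z.2 t) := by
  rw [pr_eq_sum_ite, ← sum_structuredLaw_ite_fst_demands hxy hPX hθ z]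
  simp only [mul_ite, mul_one, mul_zero]

lemma pr_outputs (hPX : ∀ i, 0 ≤ PX i) (hθ : IsPMF θ) (q : Fin T → Fin (my + 1)) :
    pr (structuredLaw my PX θ T) (fun ω => ω.2.2) q = ∏ t, extZ PX (q t : ℕ) := by
  simpa [pr_eq_sum_ite, mul_ite, hθ.2] using sum_structuredLaw_ite_outputs hPX hθ.1 q fun _ => 1

lemma logb_structuredLaw {ω : Traj mx my ms T} (hω : structuredLaw my PX θ T ω ≠ 0) :
    Real.logb 2 (structuredLaw my PX θ T ω)
      = Real.logb 2 (θ ω.1 * ∏ t, PX (ω.2.1 t)) + Real.logb 2 (∏ t, extZ PX (ω.2.2 t : ℕ))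
        + ∑ t : Fin T, (Real.logb 2 (extZ θ (Sat ω (t + 1)))
          - Real.logb 2 (xiOf mx ms PX θ (Wat ω t))) := by
  rw [structuredLaw_eq_mul_prod] at hω ⊢
  obtain ⟨hω, hC⟩ := mul_ne_zero_iff.mp hω
  obtain ⟨hA, hB⟩ := mul_ne_zero_iff.mp hω
  have hC' := Finset.prod_ne_zero_iff.mp hC
  rw [Real.logb_mul hω hC, Real.logb_mul hA hB, Real.logb_prod _ _ hC']
  congr 1
  refine Finset.sum_congr rfl fun t ht => ?_
  obtain ⟨hθt, hξt⟩ := div_ne_zero_iff.mp (hC' t ht)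
  exact Real.logb_div hθt hξt

lemma mutInfo_fst_demands_outputs (hxy : mx ≤ my) (hPX : IsPMF PX) (hθ : IsPMF θ) :
    mutInfo (structuredLaw my PX θ T) (fun ω => (ω.1, ω.2.1)) (fun ω => ω.2.2)
      = T * (ent (structuredLaw my PX θ T) (fun ω => Wat ω 0)
        - ent (structuredLaw my PX θ T) (fun ω => ω.1)) := by
  have hinj : Function.Injective fun ω : Traj mx my ms T => ((ω.1, ω.2.1), ω.2.2) :=
    fun a b h => by simpa [Prod.ext_iff, and_assoc] using h
  have hdensity : ∀ ω, structuredLaw my PX θ T ω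
      * (Real.logb 2 (structuredLaw my PX θ T ω) - Real.logb 2 (θ ω.1 * ∏ t, PX (ω.2.1 t))
        - Real.logb 2 (∏ t, extZ PX (ω.2.2 t : ℕ)))
      = ∑ t : Fin T, structuredLaw my PX θ T ω * (Real.logb 2 (extZ θ (Sat ω (t + 1)))
          - Real.logb 2 (xiOf mx ms PX θ (Wat ω t))) := by
    intro ω
    by_cases hω : structuredLaw my PX θ T ω = 0
    · simp [hω]
    · rw [logb_structuredLaw hω, ← Finset.mul_sum]
      ring
  rw [mutInfo_eq_sum_mul_logb]
  simp only [pr_apply_of_injective _ hinj, pr_fst_demands hxy hPX.1 hθ.1, pr_outputs hPX.1 hθ,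
    hdensity]
  rw [Finset.sum_comm]
  simp only [mul_sub, Finset.sum_sub_distrib, sum_mul_logb_extZ_Sat hxy hPX hθ.1 (Fin.isLt _),
    sum_mul_logb_xiOf_Wat hxy hPX hθ.1 (Fin.isLt _), Finset.sum_const, Finset.card_univ,
    Fintype.card_fin, nsmul_eq_mul]
  ring

end StructuredLaw

/-- For the process with `S₁ ~ θ`, i.i.d. demand `~ PX` independent of
`S₁`, outputs drawn according to the structured policy `b*(· | W_t)` with `W_t = S_t - X_t`,
and dynamics `S_{t+1} = S_t + Y_t - X_t`: for every horizon `T ≥ 1`,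
`(1/T) I(S₁, X^T; Y^T) = I(W₁; X₁) = H(W₁) - H(S₁)`. -/
theorem structured_policy_leakage (mx my ms : ℕ) (hxy : mx ≤ my)
    (PX : Fin (mx + 1) → ℝ) (hPX : IsPMF PX)
    (θ : Fin (ms + 1) → ℝ) (hθ : IsPMF θ)
    (T : ℕ) (hT : 1 ≤ T) :
    let p := jointA (mx := mx) (my := my) (ms := ms) θ PX
      (structuredPolicyA mx my ms PX θ) T
    mutInfo p (fun ω => (ω.1, ω.2.1)) (fun ω => ω.2.2) / T
        = mutInfo p (fun ω => Wat ω 0) (fun ω => Xat ω 0) ∧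
    mutInfo p (fun ω => Wat ω 0) (fun ω => Xat ω 0)
        = ent p (fun ω => Wat ω 0) - ent p (fun ω => ω.1) := by
  intro p
  rw [show p = structuredLaw my PX θ T from jointA_structuredPolicyA,
    mutInfo_fst_demands_outputs hxy hPX hθ, mutInfo_Wat_Xat hxy hPX hθ hT]
  refine ⟨?_, rfl⟩
  field_simp

end SmartMeter
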